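/- arXiv:2604.16918 — 2 statements merged into one kernel-verified Lean document; each statement's English description precedes it below -/
import Mathlib

section
/- For probability mass functions P, Q on a finite type with Q(x) > 0 for all x, the chi-squared divergence lower-bounds via KL: Var_Q[P/Q] = χ²(P‖Q) ≥ exp(D_KL(P‖Q)) − 1, where D_KL(P‖Q) = ∑ₓ P(x)·log(P(x)/Q(x)) (with the convention 0·log 0 = 0). -/
theorem chiSq_ge_exp_kl_sub_one {α : Type*} [Fintype α] (P Q : α → ℝ)
    (hP : ∀ x, 0 ≤ P x) (hQ : ∀ x, 0 < Q x)
    (hPsum : ∑ x, P x = 1) (hQsum : ∑ x, Q x = 1) :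
    ∑ x, Q x * (P x / Q x - 1) ^ 2
      ≥ Real.exp (∑ x, P x * Real.log (P x / Q x)) - 1 := by
  classical
  set s : Finset α := Finset.univ.filter (fun x => P x ≠ 0) with hs
  have hPs : ∑ x ∈ s, P x = 1 := by
    rw [hs, Finset.sum_filter_of_ne (fun x _ h => h), hPsum]
  have hkl : (∑ x, P x * Real.log (P x / Q x))
      = ∑ x ∈ s, P x * Real.log (P x / Q x) := by
    rw [hs, Finset.sum_filter_of_ne]
    intro x _ h
    intro hx
    exact h (by simp [hx])
  -- Jensen: exp (∑ w • t) ≤ ∑ w • exp t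
  have hjensen : Real.exp (∑ x ∈ s, P x * Real.log (P x / Q x))
      ≤ ∑ x ∈ s, P x * Real.exp (Real.log (P x / Q x)) := by
    have := convexOn_exp.map_sum_le (t := s) (w := P)
      (p := fun x => Real.log (P x / Q x))
      (fun i _ => hP i) hPs (fun i _ => Set.mem_univ _)
    simpa using this
  have hpos : ∀ x ∈ s, 0 < P x / Q x := by
    intro x hx
    have : P x ≠ 0 := (Finset.mem_filter.mp hx).2
    exact div_pos (lt_of_le_of_ne (hP x) (Ne.symm this)) (hQ x)
  have hsum2 : ∑ x ∈ s, P x * Real.exp (Real.log (P x / Q x))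
      = ∑ x ∈ s, P x ^ 2 / Q x := by
    apply Finset.sum_congr rfl
    intro x hx
    rw [Real.exp_log (hpos x hx)]
    field_simp
  have hle : ∑ x ∈ s, P x ^ 2 / Q x ≤ ∑ x, P x ^ 2 / Q x := by
    apply Finset.sum_le_sum_of_subset_of_nonneg (Finset.filter_subset _ _)
    intro i _ _
    exact div_nonneg (sq_nonneg _) (hQ i).le
  have hchi : ∑ x, Q x * (P x / Q x - 1) ^ 2 = (∑ x, P x ^ 2 / Q x) - 1 := by
    have : ∀ x, Q x * (P x / Q x - 1) ^ 2 = P x ^ 2 / Q x - 2 * P x + Q x := by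
      intro x
      have h := (hQ x).ne'
      field_simp
      ring
    simp_rw [this, Finset.sum_add_distrib, Finset.sum_sub_distrib,
      ← Finset.mul_sum, hPsum, hQsum]
    ring
  rw [hchi, ge_iff_le, sub_le_sub_iff_right, hkl]
  calc Real.exp (∑ x ∈ s, P x * Real.log (P x / Q x))
      ≤ ∑ x ∈ s, P x * Real.exp (Real.log (P x / Q x)) := hjensen
    _ = ∑ x ∈ s, P x ^ 2 / Q x := hsum2
    _ ≤ ∑ x, P x ^ 2 / Q x := hle
end

section
/- Combining the above: for probability mass functions P, Q on a finite type with Q(x) > 0 for all x, and n > 0, the effective sample size ESS = n / (1 + χ²(P‖Q)) satisfies ESS ≤ n·exp(−D_KL(P‖Q)). -/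
theorem ess_le_exp_neg_kl {α : Type*} [Fintype α] (P Q : α → ℝ) (n : ℝ)
    (hP : ∀ x, 0 ≤ P x) (hQ : ∀ x, 0 < Q x)
    (hPsum : ∑ x, P x = 1) (hQsum : ∑ x, Q x = 1) (hn : 0 < n) :
    n / (1 + ∑ x, Q x * (P x / Q x - 1) ^ 2)
      ≤ n * Real.exp (-(∑ x, P x * Real.log (P x / Q x))) := by
  set K := ∑ x, P x * Real.log (P x / Q x) with hK
  have hS : (1 : ℝ) + ∑ x, Q x * (P x / Q x - 1) ^ 2 = ∑ x, P x ^ 2 / Q x := by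
    have h1 : ∀ x : α, Q x * (P x / Q x - 1) ^ 2 = P x ^ 2 / Q x - 2 * P x + Q x := by
      intro x
      have := (hQ x).ne'
      field_simp
      ring
    simp_rw [h1, Finset.sum_add_distrib, Finset.sum_sub_distrib, ← Finset.mul_sum,
      hPsum, hQsum]
    ring
  have hexp : Real.exp K ≤ ∑ x, P x ^ 2 / Q x := by
    have h := convexOn_exp.map_sum_le (t := Finset.univ) (w := P)
      (p := fun x => Real.log (P x / Q x)) (fun i _ => hP i) hPsum
      (fun i _ => Set.mem_univ _)
    calc Real.exp K ≤ ∑ x, P x * Real.exp (Real.log (P x / Q x)) := by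
          simpa [smul_eq_mul, hK] using h
      _ = ∑ x, P x ^ 2 / Q x := by
          apply Finset.sum_congr rfl
          intro x _
          rcases eq_or_lt_of_le (hP x) with h0 | h0
          · simp [← h0]
          · rw [Real.exp_log (div_pos h0 (hQ x))]
            field_simp
  have hEpos : 0 < Real.exp K := Real.exp_pos _
  rw [hS]
  calc n / ∑ x, P x ^ 2 / Q x ≤ n / Real.exp K := by
        apply div_le_div_of_nonneg_left hn.le hEpos hexp
    _ = n * Real.exp (-K) := by rw [Real.exp_neg]; ring
end
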